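/- arXiv:1705.06581 — 3 statements merged into one kernel-verified Lean document; each statement's English description precedes it below -/
import Mathlib

section
/- Let V be a vector space over a finite field F_q, let A and S be finite subsets of V with 0 ∉ S, and let B ⊆ F_q \ {0} be a set of scalars. Then ∑_{ξ ∈ S} E(A, ξB) ≤ |A|²|B|² + |S||A||B|, where E(A, ξB) counts quadruples (a₁,a₂,b₁,b₂) ∈ A²×B² with a₁ - a₂ = (b₁ - b₂)ξ. -/
/-!
A quadruple with `a₁ ≠ a₂` forces `b₁ ≠ b₂`, and then `a₁ - a₂ = (b₁ - b₂) • ξ` determines `ξ`,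
so over all `ξ` these quadruples are counted at most `|A|²|B|²` times in total. A quadruple with
`a₁ = a₂` forces `(b₁ - b₂) • ξ = 0`, hence `b₁ = b₂` as `ξ ≠ 0`: each `ξ ∈ S` contributes at most
`|A||B|` of them.
-/

open Finset

section DilateEnergy

variable {R V : Type*} [Ring R] [IsDomain R] [AddCommGroup V] [Module R V]
  [Module.IsTorsionFree R V]

theorem eq_of_sub_eq_smul_of_sub_eq_smul {a₁ a₂ ξ ξ' : V} {c : R} (ha : a₁ ≠ a₂)
    (h : a₁ - a₂ = c • ξ) (h' : a₁ - a₂ = c • ξ') : ξ = ξ' := by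
  have hc : c ≠ 0 := by
    rintro rfl
    exact ha (sub_eq_zero.mp (by simpa using h))
  exact smul_right_injective V hc (h.symm.trans h')

variable [DecidableEq V]

/-- The quadruples counted by the energy `E(A, ξB)`. -/
def dilateEnergyQuads (A : Finset V) (B : Finset R) (ξ : V) : Finset ((V × V) × R × R) :=
  ((A ×ˢ A) ×ˢ B ×ˢ B).filter fun t => t.1.1 - t.1.2 = (t.2.1 - t.2.2) • ξ

theorem card_filter_dilateEnergyQuads_eq_le (A : Finset V) (B : Finset R) {ξ : V} (hξ : ξ ≠ 0) :
    #((dilateEnergyQuads A B ξ).filter fun t => t.1.1 = t.1.2) ≤ #A * #B := by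
  have hdiag : ∀ t ∈ (dilateEnergyQuads A B ξ).filter (fun t => t.1.1 = t.1.2),
      t.1.1 ∈ A ∧ t.2.1 ∈ B ∧ t.1.2 = t.1.1 ∧ t.2.2 = t.2.1 := by
    intro t ht
    simp only [dilateEnergyQuads, mem_filter, mem_product] at ht
    obtain ⟨⟨⟨⟨ha, -⟩, hb, -⟩, heq⟩, hdiag⟩ := ht
    rw [hdiag, sub_self, eq_comm, smul_eq_zero_iff_left hξ, sub_eq_zero] at heq
    exact ⟨ha, hb, hdiag.symm, heq.symm⟩
  rw [← card_product]
  refine card_le_card_of_injOn (fun t => (t.1.1, t.2.1)) (fun t ht => ?_) fun t ht t' ht' h => ?_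
  · obtain ⟨ha, hb, -, -⟩ := hdiag t ht
    exact mem_product.mpr ⟨ha, hb⟩
  · obtain ⟨-, -, h₁, h₂⟩ := hdiag t ht
    obtain ⟨-, -, h₁', h₂'⟩ := hdiag t' ht'
    simp only [Prod.mk.injEq] at h
    ext <;> grind

theorem sum_card_filter_dilateEnergyQuads_ne_le (A S : Finset V) (B : Finset R) :
    ∑ ξ ∈ S, #((dilateEnergyQuads A B ξ).filter fun t => t.1.1 ≠ t.1.2) ≤ #A ^ 2 * #B ^ 2 := by
  classical
  have hdisj : (S : Set V).PairwiseDisjoint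
      fun ξ => (dilateEnergyQuads A B ξ).filter fun t => t.1.1 ≠ t.1.2 := by
    intro ξ _ ξ' _ hne
    refine disjoint_left.mpr fun t ht ht' => hne ?_
    simp only [dilateEnergyQuads, mem_filter] at ht ht'
    exact eq_of_sub_eq_smul_of_sub_eq_smul ht.2 ht.1.2 ht'.1.2
  rw [← card_biUnion hdisj]
  calc #(S.biUnion _) ≤ #((A ×ˢ A) ×ˢ B ×ˢ B) :=
        card_le_card <| biUnion_subset.mpr fun _ _ =>
          (filter_subset _ _).trans (filter_subset _ _)
    _ = #A ^ 2 * #B ^ 2 := by simp only [card_product]; ring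

end DilateEnergy

theorem stmt_1_general {Fq V : Type*} [Field Fq] [AddCommGroup V] [Module Fq V]
    [DecidableEq V]
    (A S : Finset V) (B : Finset Fq) (hS : (0 : V) ∉ S) :
    ∑ ξ ∈ S, (((A ×ˢ A) ×ˢ B ×ˢ B).filter
        (fun t => t.1.1 - t.1.2 = (t.2.1 - t.2.2) • ξ)).card ≤
      A.card ^ 2 * B.card ^ 2 + S.card * A.card * B.card := by
  change ∑ ξ ∈ S, #(dilateEnergyQuads A B ξ) ≤ _
  calc ∑ ξ ∈ S, #(dilateEnergyQuads A B ξ)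
      = ∑ ξ ∈ S, #((dilateEnergyQuads A B ξ).filter fun t => t.1.1 ≠ t.1.2)
        + ∑ ξ ∈ S, #((dilateEnergyQuads A B ξ).filter fun t => t.1.1 = t.1.2) := by
        rw [← sum_add_distrib]
        exact sum_congr rfl fun ξ _ => (card_filter_add_card_filter_not _).symm.trans
          (add_comm _ _)
    _ ≤ #A ^ 2 * #B ^ 2 + ∑ _ξ ∈ S, #A * #B := by
        gcongr with ξ hξ
        · exact sum_card_filter_dilateEnergyQuads_ne_le A S B
        · exact card_filter_dilateEnergyQuads_eq_le A B (ne_of_mem_of_not_mem hξ hS)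
    _ = #A ^ 2 * #B ^ 2 + #S * #A * #B := by rw [sum_const, smul_eq_mul, mul_assoc]

/-- Energy upper bound (Lemma BKT): for `A, S ⊆ V` finite with `0 ∉ S` and scalars
`B ⊆ F_q \ {0}`, `∑_{ξ ∈ S} E(A, ξB) ≤ |A|²|B|² + |S||A||B|`. -/
theorem stmt_1 {Fq V : Type*} [Field Fq] [Fintype Fq] [AddCommGroup V] [Module Fq V]
    [DecidableEq V]
    (A S : Finset V) (B : Finset Fq) (hS : (0 : V) ∉ S) (hB : (0 : Fq) ∉ B) :
    ∑ ξ ∈ S, (((A ×ˢ A) ×ˢ B ×ˢ B).filter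
        (fun t => t.1.1 - t.1.2 = (t.2.1 - t.2.2) • ξ)).card ≤
      A.card ^ 2 * B.card ^ 2 + S.card * A.card * B.card :=
  stmt_1_general A S B hS
end

section
/- Let V be a vector space over a finite field F_q, let A, S be finite subsets of V with 0 ∉ S, and B ⊆ F_q \ {0}. Then there exists ξ ∈ S such that |A + Bξ| ≥ (1/2)·min{|S|, |A||B|}, where A + Bξ = {a + bξ : a ∈ A, b ∈ B}. -/
/-!
Write `D = A ×ˢ B` and `f ξ (a, b) = a + b • ξ`, so that `A + Bξ` is the image of `D` under
`f ξ`. By Cauchy–Schwarz over the fibres, `|D|² ≤ |A + Bξ| · E(ξ)`, where `E(ξ)` counts the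
ordered pairs of `D` with equal image. Two distinct elements of `D` have equal images for at most
one `ξ`, so `∑_{ξ ∈ S} E(ξ) ≤ |S||D| + |D|²`, and the `ξ ∈ S` minimising `E` has
`|S| E(ξ) ≤ |S||D| + |D|²`; the two bounds together force `2|A + Bξ| ≥ min(|S|, |D|)`.
-/

open Finset

section Collisions

variable {α β ι : Type*} [DecidableEq β]

/-- For `f (a, b) = a + b • ξ` on `A ×ˢ B` with `ξ ≠ 0` this is the additive energy `E(A, ξB)`. -/
def collisionCount (s : Finset α) (f : α → β) : ℕ := #{q ∈ s ×ˢ s | f q.1 = f q.2}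

lemma collisionCount_eq_sum_sq (s : Finset α) (f : α → β) :
    collisionCount s f = ∑ b ∈ s.image f, #{a ∈ s | f a = b} ^ 2 := by
  rw [collisionCount, card_eq_sum_card_fiberwise (f := fun q => f q.1) (t := s.image f)
    fun q hq => mem_image_of_mem f (mem_product.1 (mem_filter.1 hq).1).1]
  refine sum_congr rfl fun b _ => ?_
  rw [sq, ← card_product, filter_filter]
  congr 1
  ext ⟨x, y⟩
  simp only [mem_filter, mem_product]
  constructor
  · rintro ⟨⟨hx, hy⟩, hxy, rfl⟩
    exact ⟨⟨hx, rfl⟩, hy, hxy.symm⟩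
  · rintro ⟨⟨hx, rfl⟩, hy, hyx⟩
    exact ⟨⟨hx, hy⟩, hyx.symm, rfl⟩

lemma sq_card_le_card_image_mul_collisionCount (s : Finset α) (f : α → β) :
    #s ^ 2 ≤ #(s.image f) * collisionCount s f := by
  rw [collisionCount_eq_sum_sq, card_eq_sum_card_image f s]
  exact sq_sum_le_card_mul_sum_sq

lemma collisionCount_eq_card_add [DecidableEq α] (s : Finset α) (f : α → β) :
    collisionCount s f = #s + #{q ∈ s.offDiag | f q.1 = f q.2} := by
  rw [collisionCount, ← diag_union_offDiag, filter_union,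
    card_union_of_disjoint (disjoint_filter_filter (disjoint_diag_offDiag s)),
    filter_true_of_mem fun q hq => by rw [(mem_diag.1 hq).2], diag_card]

lemma sum_collisionCount_le [DecidableEq α] (s : Finset α) (I : Finset ι) (f : ι → α → β)
    (hf : ∀ q ∈ s.offDiag, ∀ i ∈ I, ∀ j ∈ I, f i q.1 = f i q.2 → f j q.1 = f j q.2 → i = j) :
    ∑ i ∈ I, collisionCount s (f i) ≤ #I * #s + #s ^ 2 := by
  simp only [collisionCount_eq_card_add, sum_add_distrib, sum_const, smul_eq_mul]
  gcongr
  calc ∑ i ∈ I, #{q ∈ s.offDiag | f i q.1 = f i q.2}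
      = ∑ q ∈ s.offDiag, #{i ∈ I | f i q.1 = f i q.2} := by
        simp only [card_eq_sum_ones, sum_filter]; exact sum_comm
    _ ≤ #s.offDiag * 1 := sum_le_card_nsmul _ _ _ fun q hq =>
        card_le_one.2 fun i hi j hj => hf q hq i (mem_filter.1 hi).1 j (mem_filter.1 hj).1
          (mem_filter.1 hi).2 (mem_filter.1 hj).2
    _ ≤ #s ^ 2 := by rw [mul_one, offDiag_card, sq]; exact Nat.sub_le _ _

end Collisions

lemma eq_of_add_smul_eq_add_smul {R V : Type*} [Ring R] [IsDomain R] [AddCommGroup V]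
    [Module R V] [Module.IsTorsionFree R V] {a a' ξ η : V} {b b' : R} (hne : (a, b) ≠ (a', b'))
    (hξ : a + b • ξ = a' + b' • ξ) (hη : a + b • η = a' + b' • η) : ξ = η := by
  have hb : b - b' ≠ 0 := by
    rintro hb
    obtain rfl := sub_eq_zero.1 hb
    exact hne (by rw [add_left_inj] at hξ; rw [hξ])
  have hsmul : ∀ x, a + b • x = a' + b' • x → (b - b') • x = a' - a := fun x h => by
    rw [sub_smul, sub_eq_sub_iff_add_eq_add, add_comm, h]
  exact smul_right_injective V hb ((hsmul ξ hξ).trans (hsmul η hη).symm)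

lemma min_le_two_mul_of_sq_le_mul {s n k e : ℕ} (hk : n ^ 2 ≤ k * e)
    (he : s * e ≤ s * n + n ^ 2) : min s n ≤ 2 * k := by
  have key : s * n ^ 2 ≤ k * (s * n + n ^ 2) :=
    calc s * n ^ 2 ≤ s * (k * e) := by gcongr
      _ = k * (s * e) := by ring
      _ ≤ k * (s * n + n ^ 2) := by gcongr
  rcases Nat.eq_zero_or_pos n with rfl | hn
  · simp
  rcases le_total s n with hsn | hns
  · refine (min_le_left _ _).trans (le_of_mul_le_mul_right (a := n ^ 2) ?_ (by positivity))
    calc s * n ^ 2 ≤ k * (n ^ 2 + n ^ 2) := key.trans (by rw [sq]; gcongr)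
      _ = 2 * k * n ^ 2 := by ring
  · have hs : 0 < s := hn.trans_le hns
    refine (min_le_right _ _).trans (le_of_mul_le_mul_right (a := s * n) ?_ (by positivity))
    calc n * (s * n) = s * n ^ 2 := by ring
      _ ≤ k * (s * n + s * n) := key.trans (by rw [sq]; gcongr)
      _ = 2 * k * (s * n) := by ring

theorem stmt_2_general {Fq V : Type*} [Field Fq] [AddCommGroup V] [Module Fq V]
    [DecidableEq V]
    (A S : Finset V) (B : Finset Fq)
    (hSne : S.Nonempty) :
    ∃ ξ ∈ S, 2 * ((A ×ˢ B).image (fun p => p.1 + p.2 • ξ)).card ≥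
      min S.card (A.card * B.card) := by
  classical
  let f : V → V × Fq → V := fun ξ p => p.1 + p.2 • ξ
  obtain ⟨ξ, hξS, hmin⟩ := S.exists_min_image (fun ξ => collisionCount (A ×ˢ B) (f ξ)) hSne
  have henergy : #S * collisionCount (A ×ˢ B) (f ξ) ≤ #S * #(A ×ˢ B) + #(A ×ˢ B) ^ 2 :=
    (card_nsmul_le_sum S _ _ hmin).trans <| sum_collisionCount_le _ S f
      fun q hq _ _ _ _ => eq_of_add_smul_eq_add_smul (mem_offDiag.1 hq).2.2
  refine ⟨ξ, hξS, ?_⟩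
  rw [← card_product]
  exact min_le_two_mul_of_sq_le_mul (sq_card_le_card_image_mul_collisionCount _ (f ξ)) henergy

/-- Lemma BKT, second part: there exists `ξ ∈ S` with
`|A + Bξ| ≥ (1/2)·min{|S|, |A||B|}`. -/
theorem stmt_2 {Fq V : Type*} [Field Fq] [Fintype Fq] [AddCommGroup V] [Module Fq V]
    [DecidableEq V]
    (A S : Finset V) (B : Finset Fq) (hS : (0 : V) ∉ S) (hB : (0 : Fq) ∉ B)
    (hSne : S.Nonempty) :
    ∃ ξ ∈ S, 2 * ((A ×ˢ B).image (fun p => p.1 + p.2 • ξ)).card ≥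
      min S.card (A.card * B.card) :=
  stmt_2_general A S B hSne
end

section
/- Let A ⊆ F_q be a finite set and suppose there is K > 0 with |A| ≤ q/(4K) and D_×(A) ≥ |A|⁸/q + 3q|A|⁵/K, where D_×(A) counts 8-tuples of A with (a₁-a₂)(a₃-a₄) = (a₅-a₆)(a₇-a₈). Then there exists a set X ⊆ F_q such that E(A, ξA) ≥ |A|³/K for all ξ ∈ X and q/(K|A|) ≤ |X| ≤ 4Kq/(3|A|). -/
/-!
Write `q = |F|`, `N = |A|` and `E(ξ) = E(A, ξA)`. Counting, for each configuration of
differences, the `ξ` with `(x₁, x₂) = ξ (y₁, y₂)` gives the moments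
`∑ξ E(ξ) = qN² + N⁴ - N³` and `∑ξ E(ξ)² = D_×(A) + qN⁴ - N⁶`, while Cauchy–Schwarz on the
fibres of `(a, b) ↦ a - ξ b` gives `N⁴ ≤ q E(ξ) ≤ qN³`. Take `X = {ξ : E(ξ) ≥ N³/K}` and the
nonnegative excess `G = qE - N⁴`. Since `N ≤ q/(4K)`, `G ≥ 3qN³/(4K)` on `X`, and Markov's
inequality for `∑ G = q²N² - qN³` bounds `|X|` from above. The hypothesis on `D_×(A)` makes
`∑ G²` at least `9q³N⁵/(4K)`; off `X` we have `G² ≤ (qN³/K) G`, contributing at most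
`q³N⁵/K`, and on `X` each `G² ≤ q²N⁶`, which bounds `|X|` from below.
-/

open Finset

lemma card_filter_product_and {α β : Type*} (s : Finset α) (t : Finset β) (p : α → Prop)
    (q : β → Prop) [DecidablePred p] [DecidablePred q] :
    #{x ∈ s ×ˢ t | p x.1 ∧ q x.2} = #{a ∈ s | p a} * #{b ∈ t | q b} := by
  rw [filter_product, card_product]

lemma sq_card_le_card_mul_card_filter_eq {β γ : Type*} [Fintype γ] [DecidableEq γ]
    (s : Finset β) (f : β → γ) :
    #s ^ 2 ≤ Fintype.card γ * #{p ∈ s ×ˢ s | f p.1 = f p.2} := by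
  have hfiber (c : γ) :
      #{x ∈ s | f x = c} ^ 2 = #{p ∈ s ×ˢ s | f p.1 = f p.2 ∧ f p.1 = c} := by
    rw [sq, ← card_filter_product_and]
    refine congrArg card (filter_congr fun p _ => ⟨?_, ?_⟩)
    · rintro ⟨h₁, h₂⟩; exact ⟨h₁.trans h₂.symm, h₁⟩
    · rintro ⟨h, h₁⟩; exact ⟨h₁, h.symm.trans h₁⟩
  calc #s ^ 2 = (∑ c, #{x ∈ s | f x = c}) ^ 2 := by
        rw [card_eq_sum_card_fiberwise fun x _ => mem_univ (f x)]
    _ ≤ Fintype.card γ * ∑ c, #{x ∈ s | f x = c} ^ 2 := sq_sum_le_card_mul_sum_sq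
    _ = Fintype.card γ * #{p ∈ s ×ˢ s | f p.1 = f p.2} := by
        rw [card_eq_sum_card_fiberwise (f := fun p => f p.1) fun p _ => mem_univ (f p.1)]
        simp only [hfiber, filter_filter]

lemma card_filter_sub_eq_zero {α : Type*} [AddGroup α] [DecidableEq α] (A : Finset α) :
    #{u ∈ A ×ˢ A | u.1 - u.2 = 0} = #A := by
  simp only [sub_eq_zero, ← diag_eq_filter, diag_card]

section Moments

variable {ι R : Type*} [CommRing R] [LinearOrder R] [IsStrictOrderedRing R]
  (s : Finset ι) (p : ι → Prop) [DecidablePred p] {f : ι → R}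

lemma card_filter_mul_le_sum {T : R} (h₀ : ∀ i ∈ s, 0 ≤ f i) (hT : ∀ i ∈ s, p i → T ≤ f i) :
    #{i ∈ s | p i} * T ≤ ∑ i ∈ s, f i :=
  calc (#{i ∈ s | p i} : R) * T ≤ ∑ i ∈ s with p i, f i := by
        rw [← nsmul_eq_mul]
        exact card_nsmul_le_sum _ _ _ fun i hi => hT i (mem_filter.1 hi).1 (mem_filter.1 hi).2
    _ ≤ ∑ i ∈ s, f i := sum_le_sum_of_subset_of_nonneg (filter_subset _ _) fun i hi _ => h₀ i hi

lemma sum_sq_le_mul_sum_add_card_filter_mul_sq {T M : R} (hT₀ : 0 ≤ T)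
    (h₀ : ∀ i ∈ s, 0 ≤ f i) (hM : ∀ i ∈ s, f i ≤ M) (hT : ∀ i ∈ s, ¬p i → f i ≤ T) :
    ∑ i ∈ s, f i ^ 2 ≤ T * ∑ i ∈ s, f i + #{i ∈ s | p i} * M ^ 2 := by
  rw [← sum_filter_add_sum_filter_not s p, add_comm]
  gcongr
  · calc ∑ i ∈ s with ¬p i, f i ^ 2 ≤ ∑ i ∈ s with ¬p i, T * f i := by
          refine sum_le_sum fun i hi => ?_
          obtain ⟨hs, hp⟩ := mem_filter.1 hi
          rw [sq]; exact mul_le_mul_of_nonneg_right (hT i hs hp) (h₀ i hs)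
      _ ≤ T * ∑ i ∈ s, f i := by
          rw [← mul_sum]
          exact mul_le_mul_of_nonneg_left
            (sum_le_sum_of_subset_of_nonneg (filter_subset _ _) fun i hi _ => h₀ i hi) hT₀
  · rw [← nsmul_eq_mul]
    refine sum_le_card_nsmul _ _ _ fun i hi => ?_
    obtain ⟨hs, -⟩ := mem_filter.1 hi
    exact pow_le_pow_left₀ (h₀ i hs) (hM i hs) 2

end Moments

section Ratios

variable {F : Type*} [Field F] [Fintype F] [DecidableEq F]

lemma card_filter_eq_mul_and_eq_mul_of_ne_zero {x₁ y₁ x₂ y₂ : F} (hy : y₁ ≠ 0) :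
    #{ξ | x₁ = ξ * y₁ ∧ x₂ = ξ * y₂} = if x₁ * y₂ = x₂ * y₁ then 1 else 0 := by
  split_ifs with h
  · refine card_eq_one.2 ⟨x₁ / y₁, eq_singleton_iff_unique_mem.2 ⟨?_, fun ξ hξ => ?_⟩⟩
    · simp only [mem_filter, mem_univ, true_and]
      constructor <;> field_simp
      exact h.symm
    · rw [(mem_filter.1 hξ).2.1]; field_simp
  · refine card_eq_zero.2 <| filter_false_of_mem fun ξ _ ⟨h₁, h₂⟩ => h ?_
    rw [h₁, h₂]; ring

lemma card_filter_eq_mul_and_eq_mul_add (x₁ y₁ x₂ y₂ : F) :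
    #{ξ | x₁ = ξ * y₁ ∧ x₂ = ξ * y₂} + (if y₁ = 0 ∧ y₂ = 0 then 1 else 0) =
      (if x₁ * y₂ = x₂ * y₁ then 1 else 0) +
        Fintype.card F * (if (x₁ = 0 ∧ y₁ = 0) ∧ x₂ = 0 ∧ y₂ = 0 then 1 else 0) := by
  by_cases hy₁ : y₁ = 0
  · by_cases hy₂ : y₂ = 0
    · subst hy₁ hy₂
      by_cases hx : x₁ = 0 ∧ x₂ = 0
      · simp [hx.1, hx.2, add_comm]
      · simp [hx]
    · have := card_filter_eq_mul_and_eq_mul_of_ne_zero (x₁ := x₂) (x₂ := x₁) hy₂ (y₂ := y₁)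
      simp_rw [and_comm (a := x₁ = _), this, eq_comm (a := x₂ * y₁)]
      simp [hy₂]
  · simp [card_filter_eq_mul_and_eq_mul_of_ne_zero hy₁, hy₁]

lemma sum_card_filter_eq_mul_and_eq_mul_add {ω : Type*} (W : Finset ω)
    (x₁ y₁ x₂ y₂ : ω → F) :
    ∑ ξ, #{w ∈ W | x₁ w = ξ * y₁ w ∧ x₂ w = ξ * y₂ w} + #{w ∈ W | y₁ w = 0 ∧ y₂ w = 0} =
      #{w ∈ W | x₁ w * y₂ w = x₂ w * y₁ w} +
        Fintype.card F * #{w ∈ W | (x₁ w = 0 ∧ y₁ w = 0) ∧ x₂ w = 0 ∧ y₂ w = 0} := by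
  simp only [card_filter, mul_sum]
  rw [sum_comm, ← sum_add_distrib, ← sum_add_distrib]
  refine sum_congr rfl fun w _ => ?_
  rw [← card_filter]
  exact card_filter_eq_mul_and_eq_mul_add _ _ _ _

variable {β : Type*} (S : Finset β) (d : β → F)

lemma sum_card_filter_eq_mul_add :
    ∑ ξ, #{t ∈ S ×ˢ S | d t.1 = ξ * d t.2} + #S * #{u ∈ S | d u = 0} =
      Fintype.card F * #{u ∈ S | d u = 0} ^ 2 + #S ^ 2 := by
  have h := sum_card_filter_eq_mul_and_eq_mul_add (S ×ˢ S) (d ·.1) (d ·.2) (d ·.1) (d ·.2)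
  simp only [and_self, filter_true] at h
  rw [filter_product_right (fun u => d u = 0),
    card_filter_product_and _ _ (fun u => d u = 0) (fun u => d u = 0)] at h
  simp only [card_product] at h
  rw [h]; ring

lemma sum_sq_card_filter_eq_mul_add :
    ∑ ξ, #{t ∈ S ×ˢ S | d t.1 = ξ * d t.2} ^ 2 + #S ^ 2 * #{u ∈ S | d u = 0} ^ 2 =
      #{w ∈ (S ×ˢ S) ×ˢ (S ×ˢ S) | d w.1.1 * d w.2.2 = d w.2.1 * d w.1.2} +
        Fintype.card F * #{u ∈ S | d u = 0} ^ 4 := by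
  have h := sum_card_filter_eq_mul_and_eq_mul_add ((S ×ˢ S) ×ˢ (S ×ˢ S))
    (d ·.1.1) (d ·.1.2) (d ·.2.1) (d ·.2.2)
  have hzero : #{t ∈ S ×ˢ S | d t.1 = 0 ∧ d t.2 = 0} = #{u ∈ S | d u = 0} ^ 2 := by
    rw [card_filter_product_and _ _ (fun u => d u = 0) (fun u => d u = 0), sq]
  have hzero' : #{t ∈ S ×ˢ S | d t.2 = 0} = #S * #{u ∈ S | d u = 0} := by
    rw [filter_product_right (fun u => d u = 0), card_product]
  rw [card_filter_product_and _ _ (fun t : β × β => d t.1 = 0 ∧ d t.2 = 0)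
      (fun t : β × β => d t.1 = 0 ∧ d t.2 = 0),
    card_filter_product_and _ _ (fun t : β × β => d t.2 = 0) (fun t : β × β => d t.2 = 0),
    hzero, hzero'] at h
  have hsq (ξ : F) : #{t ∈ S ×ˢ S | d t.1 = ξ * d t.2} ^ 2 =
      #{w ∈ (S ×ˢ S) ×ˢ (S ×ˢ S) | d w.1.1 = ξ * d w.1.2 ∧ d w.2.1 = ξ * d w.2.2} := by
    rw [sq, card_filter_product_and _ _ (fun t : β × β => d t.1 = ξ * d t.2)
      (fun t : β × β => d t.1 = ξ * d t.2)]
  simp only [hsq]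
  linear_combination h

end Ratios

section Energy

variable {R : Type*} [CommRing R] [DecidableEq R] (A : Finset R)

def dilationEnergy (ξ : R) : ℕ :=
  #{t ∈ (A ×ˢ A) ×ˢ A ×ˢ A | t.1.1 - t.1.2 = ξ * (t.2.1 - t.2.2)}

def diffMulEnergy : ℕ :=
  #{t ∈ ((A ×ˢ A) ×ˢ A ×ˢ A) ×ˢ ((A ×ˢ A) ×ˢ A ×ˢ A) |
    (t.1.1.1 - t.1.1.2) * (t.1.2.1 - t.1.2.2) = (t.2.1.1 - t.2.1.2) * (t.2.2.1 - t.2.2.2)}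

lemma dilationEnergy_le (ξ : R) : dilationEnergy A ξ ≤ #A ^ 3 := by
  calc dilationEnergy A ξ ≤ #(A ×ˢ A ×ˢ A) := by
        refine card_le_card_of_injOn (fun t => (t.1.2, t.2)) (fun t ht => ?_) ?_
        · simp only [coe_filter, Set.mem_ofPred_eq, mem_product] at ht
          simp [ht.1.1.2, ht.1.2]
        · rintro ⟨⟨a₁, a₂⟩, b⟩ ht ⟨⟨a₁', a₂'⟩, b'⟩ ht' h
          simp only [coe_filter, Set.mem_ofPred_eq, Prod.mk.injEq] at ht ht' h
          obtain ⟨rfl, rfl⟩ := h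
          have : a₁ = a₁' := by linear_combination ht.2 - ht'.2
          rw [this]
    _ = #A ^ 3 := by simp only [card_product]; ring

lemma dilationEnergy_eq_card_filter (ξ : R) :
    dilationEnergy A ξ =
      #{p ∈ (A ×ˢ A) ×ˢ A ×ˢ A | p.1.1 - ξ * p.1.2 = p.2.1 - ξ * p.2.2} := by
  refine card_nbij' (fun t => ((t.1.1, t.2.1), (t.1.2, t.2.2)))
    (fun p => ((p.1.1, p.2.1), (p.1.2, p.2.2))) ?_ ?_ (fun _ _ => rfl) (fun _ _ => rfl) <;>
  · rintro ⟨⟨a₁, a₂⟩, a₃, a₄⟩ h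
    simp only [coe_filter, Set.mem_ofPred_eq, mem_product] at h ⊢
    exact ⟨by tauto, by linear_combination h.2⟩

lemma diffMulEnergy_eq_card_filter :
    diffMulEnergy A = #{w ∈ ((A ×ˢ A) ×ˢ A ×ˢ A) ×ˢ ((A ×ˢ A) ×ˢ A ×ˢ A) |
      (w.1.1.1 - w.1.1.2) * (w.2.2.1 - w.2.2.2) = (w.2.1.1 - w.2.1.2) * (w.1.2.1 - w.1.2.2)} := by
  refine card_nbij' (fun w => ((w.1.1, w.2.2), (w.2.1, w.1.2)))
    (fun w => ((w.1.1, w.2.2), (w.2.1, w.1.2))) ?_ ?_ (fun _ _ => rfl) (fun _ _ => rfl) <;>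
  · intro w h
    simp only [coe_filter, Set.mem_ofPred_eq, mem_product] at h ⊢
    tauto

lemma card_pow_four_le_card_mul_dilationEnergy [Fintype R] (ξ : R) :
    #A ^ 4 ≤ Fintype.card R * dilationEnergy A ξ := by
  have h := sq_card_le_card_mul_card_filter_eq (A ×ˢ A) (fun u => u.1 - ξ * u.2)
  rw [card_product, ← sq, ← pow_mul] at h
  rwa [dilationEnergy_eq_card_filter]

end Energy

section Popular

variable {F : Type*} [Field F] [Fintype F] [DecidableEq F] (A : Finset F) {K : ℝ}

lemma sum_dilationEnergy_add :
    ∑ ξ, dilationEnergy A ξ + #A ^ 3 = Fintype.card F * #A ^ 2 + #A ^ 4 := by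
  have h := sum_card_filter_eq_mul_add (A ×ˢ A) (fun u => u.1 - u.2)
  rw [card_filter_sub_eq_zero, card_product] at h
  unfold dilationEnergy
  linear_combination h

lemma sum_sq_dilationEnergy_add :
    ∑ ξ, dilationEnergy A ξ ^ 2 + #A ^ 6 = diffMulEnergy A + Fintype.card F * #A ^ 4 := by
  have h := sum_sq_card_filter_eq_mul_add (A ×ˢ A) (fun u => u.1 - u.2)
  rw [card_filter_sub_eq_zero, card_product] at h
  unfold dilationEnergy
  rw [diffMulEnergy_eq_card_filter]
  linear_combination h

noncomputable def energyExcess (ξ : F) : ℝ := Fintype.card F * dilationEnergy A ξ - #A ^ 4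

lemma energyExcess_nonneg (ξ : F) : 0 ≤ energyExcess A ξ := by
  have := card_pow_four_le_card_mul_dilationEnergy A ξ
  rw [energyExcess, sub_nonneg]; exact_mod_cast this

lemma energyExcess_le (ξ : F) : energyExcess A ξ ≤ Fintype.card F * #A ^ 3 := by
  have : (dilationEnergy A ξ : ℝ) ≤ #A ^ 3 := by exact_mod_cast dilationEnergy_le A ξ
  rw [energyExcess, sub_le_iff_le_add]
  exact (mul_le_mul_of_nonneg_left this (Nat.cast_nonneg _)).trans
    (le_add_of_nonneg_right (by positivity))

lemma sum_energyExcess :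
    ∑ ξ, energyExcess A ξ = Fintype.card F ^ 2 * #A ^ 2 - Fintype.card F * #A ^ 3 := by
  have h : ∑ ξ, (dilationEnergy A ξ : ℝ) + #A ^ 3 = Fintype.card F * #A ^ 2 + #A ^ 4 := by
    exact_mod_cast sum_dilationEnergy_add A
  simp only [energyExcess, sum_sub_distrib, ← mul_sum, sum_const, card_univ, nsmul_eq_mul]
  linear_combination (Fintype.card F : ℝ) * h

lemma sum_sq_energyExcess :
    ∑ ξ, energyExcess A ξ ^ 2 = Fintype.card F ^ 2 * diffMulEnergy A
      + Fintype.card F ^ 3 * #A ^ 4 - 3 * Fintype.card F ^ 2 * #A ^ 6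
      + 2 * Fintype.card F * #A ^ 7 - Fintype.card F * #A ^ 8 := by
  have h₁ : ∑ ξ, (dilationEnergy A ξ : ℝ) + #A ^ 3 = Fintype.card F * #A ^ 2 + #A ^ 4 := by
    exact_mod_cast sum_dilationEnergy_add A
  have h₂ : ∑ ξ, (dilationEnergy A ξ : ℝ) ^ 2 + #A ^ 6 =
      diffMulEnergy A + Fintype.card F * #A ^ 4 := by
    exact_mod_cast sum_sq_dilationEnergy_add A
  simp only [energyExcess, sub_sq, sum_add_distrib, sum_sub_distrib, mul_pow, ← mul_sum,
    ← sum_mul, sum_const, card_univ, nsmul_eq_mul]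
  linear_combination (Fintype.card F : ℝ) ^ 2 * h₂ - 2 * Fintype.card F * #A ^ 4 * h₁

noncomputable def popularDilations (K : ℝ) : Finset F :=
  {ξ | (#A : ℝ) ^ 3 / K ≤ dilationEnergy A ξ}

lemma card_popularDilations_mul_le (hK : 0 < K) (hA : 4 * K * #A ≤ Fintype.card F) :
    (#(popularDilations A K) : ℝ) * (3 * #A) ≤ 4 * K * Fintype.card F := by
  have hpop (ξ : F) (_ : ξ ∈ univ) (h : (#A : ℝ) ^ 3 / K ≤ dilationEnergy A ξ) :
      Fintype.card F * #A ^ 3 / K - #A ^ 4 ≤ energyExcess A ξ := by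
    rw [energyExcess, mul_div_assoc]
    exact sub_le_sub_right (mul_le_mul_of_nonneg_left h (Nat.cast_nonneg _)) _
  have hmarkov := card_filter_mul_le_sum univ _ (fun ξ _ => energyExcess_nonneg A ξ) hpop
  rw [sum_energyExcess] at hmarkov
  change (#(popularDilations A K) : ℝ) * _ ≤ _ at hmarkov
  set q : ℝ := (Fintype.card F : ℝ)
  set N : ℝ := (#A : ℝ)
  set x : ℝ := (#(popularDilations A K) : ℝ)
  have hN : 0 ≤ N := by positivity
  rcases hN.eq_or_lt with hN₀ | hN₀
  · rw [← hN₀, mul_zero, mul_zero]; positivity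
  have hKmarkov := mul_le_mul_of_nonneg_left hmarkov hK.le
  rw [mul_left_comm, mul_sub, mul_div_cancel₀ _ hK.ne'] at hKmarkov
  have hAx := mul_le_mul_of_nonneg_left (mul_le_mul_of_nonneg_right hA (pow_nonneg hN 3))
    (by positivity : 0 ≤ x)
  have hpos : 0 ≤ K * q * N ^ 3 := by positivity
  have h : x * (3 * N) * (q * N ^ 2) ≤ 4 * K * q * (q * N ^ 2) := by linarith
  exact le_of_mul_le_mul_right h (by positivity)

lemma le_card_popularDilations_mul (hK : 0 < K) (hA : 4 * K * #A ≤ Fintype.card F)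
    (hA₀ : A.Nonempty)
    (hD : (#A : ℝ) ^ 8 / Fintype.card F + 3 * Fintype.card F * #A ^ 5 / K ≤ diffMulEnergy A) :
    (Fintype.card F : ℝ) ≤ #(popularDilations A K) * (K * #A) := by
  have hunpop (ξ : F) (_ : ξ ∈ univ) (h : ¬(#A : ℝ) ^ 3 / K ≤ dilationEnergy A ξ) :
      energyExcess A ξ ≤ Fintype.card F * #A ^ 3 / K := by
    rw [energyExcess, mul_div_assoc]
    have := mul_le_mul_of_nonneg_left (not_le.1 h).le (Nat.cast_nonneg (Fintype.card F))
    linarith [pow_nonneg (Nat.cast_nonneg (α := ℝ) #A) 4]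
  have hmoment := sum_sq_le_mul_sum_add_card_filter_mul_sq univ _ (by positivity)
    (fun ξ _ => energyExcess_nonneg A ξ) (fun ξ _ => energyExcess_le A ξ) hunpop
  rw [sum_energyExcess, sum_sq_energyExcess] at hmoment
  change _ ≤ _ + (#(popularDilations A K) : ℝ) * _ at hmoment
  set q : ℝ := (Fintype.card F : ℝ)
  set N : ℝ := (#A : ℝ)
  set x : ℝ := (#(popularDilations A K) : ℝ)
  set D : ℝ := (diffMulEnergy A : ℝ)
  have hD' : K * q * N ^ 8 + 3 * q ^ 3 * N ^ 5 ≤ K * q ^ 2 * D := by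
    have e : K * q ^ 2 * (N ^ 8 / q + 3 * q * N ^ 5 / K) = K * q * N ^ 8 + 3 * q ^ 3 * N ^ 5 := by
      field_simp
    exact e ▸ mul_le_mul_of_nonneg_left hD (by positivity)
  have hKmoment := mul_le_mul_of_nonneg_left hmoment hK.le
  rw [mul_add, ← mul_assoc, mul_div_cancel₀ _ hK.ne'] at hKmoment
  have hAN := mul_le_mul_of_nonneg_right hA (by positivity : 0 ≤ 3 * q ^ 2 * N ^ 5)
  have hpos : 0 ≤ K * q ^ 3 * N ^ 4 + 2 * K * q * N ^ 7 + q ^ 2 * N ^ 6 := by positivity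
  have hpos' : 0 ≤ q ^ 3 * N ^ 5 := by positivity
  have h : q * (q ^ 2 * N ^ 5) ≤ x * (K * N) * (q ^ 2 * N ^ 5) := by linarith
  exact le_of_mul_le_mul_right h (by positivity)

end Popular

/-- Theorem B: if `|A| ≤ q/(4K)` and `D_×(A) ≥ |A|⁸/q + 3q|A|⁵/K`, then there is a
set `X ⊆ F_q` with `E(A, ξA) ≥ |A|³/K` for all `ξ ∈ X` and
`q/(K|A|) ≤ |X| ≤ 4Kq/(3|A|)`. -/
theorem stmt_4 {Fq : Type*} [Field Fq] [Fintype Fq] [DecidableEq Fq]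
    (A : Finset Fq) (K : ℝ) (hK : 0 < K)
    (hA : (A.card : ℝ) ≤ (Fintype.card Fq : ℝ) / (4 * K))
    (hD : (((((A ×ˢ A) ×ˢ A ×ˢ A) ×ˢ ((A ×ˢ A) ×ˢ A ×ˢ A)).filter
        (fun t => (t.1.1.1 - t.1.1.2) * (t.1.2.1 - t.1.2.2)
          = (t.2.1.1 - t.2.1.2) * (t.2.2.1 - t.2.2.2))).card : ℝ) ≥
      (A.card : ℝ) ^ 8 / (Fintype.card Fq : ℝ)
        + 3 * (Fintype.card Fq : ℝ) * (A.card : ℝ) ^ 5 / K) :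
    ∃ X : Finset Fq,
      (∀ ξ ∈ X, ((((A ×ˢ A) ×ˢ A ×ˢ A).filter
          (fun t => t.1.1 - t.1.2 = ξ * (t.2.1 - t.2.2))).card : ℝ)
            ≥ (A.card : ℝ) ^ 3 / K) ∧
      (Fintype.card Fq : ℝ) / (K * A.card) ≤ (X.card : ℝ) ∧
      (X.card : ℝ) ≤ 4 * K * (Fintype.card Fq : ℝ) / (3 * A.card) := by
  rcases A.eq_empty_or_nonempty with rfl | hA₀
  · exact ⟨∅, by simp, by simp, by simp⟩
  have hA' : 4 * K * #A ≤ Fintype.card Fq := by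
    rwa [le_div_iff₀ (by positivity), mul_comm] at hA
  refine ⟨popularDilations A K, fun ξ hξ => (mem_filter.1 hξ).2, ?_, ?_⟩
  · rw [div_le_iff₀ (by positivity)]
    exact le_card_popularDilations_mul A hK hA' hA₀ hD
  · rw [le_div_iff₀ (by positivity)]
    exact card_popularDilations_mul_le A hK hA'
end
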